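/- Under the prior probability shift model, if the training conditional mean is E(Y₁|X₁=x) = μ₁(xᵀβ) with μ₁ strictly increasing, and the canonical parameter θ(x) is a strictly increasing function of xᵀβ, then there exists a nondecreasing function μ₂ such that the testing conditional mean satisfies E(Y₂|X₂=x) = μ₂(xᵀβ). -/

import Mathlib

/-!
The testing density at `x` is, up to a positive factor, `sel y · exp (c y) · exp (θ(x) y / a)`:
an exponential tilt of one fixed nonnegative weight. A larger tilt parameter gives a density whose
likelihood ratio against the smaller one is nondecreasing in `y`, and a monotone likelihood ratio
orders the means; the symmetrisation `∬ (y - z) (V y W z - W y V z) ≥ 0` proves this without any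
regularity beyond integrability. Since `θ(x)` is a monotone function of `xᵀβ`, so is the testing
mean, and a function on `Fin p → ℝ` that is monotone along a linear functional factors through it.
-/

open MeasureTheory Real

noncomputable def densityMean (W : ℝ → ℝ) : ℝ := (∫ y, y * W y) / ∫ y, W y

/-- `V / W` is nondecreasing, written without division. -/
def LikelihoodRatioLE (W V : ℝ → ℝ) : Prop := ∀ y z, 0 ≤ (y - z) * (V y * W z - W y * V z)

namespace LikelihoodRatioLE

variable {W V : ℝ → ℝ}

theorem const_mul (h : LikelihoodRatioLE W V) {k k' : ℝ} (hk : 0 ≤ k) (hk' : 0 ≤ k') :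
    LikelihoodRatioLE (fun y => k * W y) (fun y => k' * V y) := fun y z => by
  have := mul_nonneg (mul_nonneg hk hk') (h y z)
  linarith [show k * k' * ((y - z) * (V y * W z - W y * V z)) =
    (y - z) * (k' * V y * (k * W z) - k * W y * (k' * V z)) by ring]

theorem densityMean_le (h : LikelihoodRatioLE W V) (hW : Integrable W) (hV : Integrable V)
    (hyW : Integrable fun y => y * W y) (hyV : Integrable fun y => y * V y)
    (hW_pos : 0 < ∫ y, W y) (hV_pos : 0 < ∫ y, V y) : densityMean W ≤ densityMean V := by
  have hsymm : ∫ q : ℝ × ℝ, (q.1 - q.2) * (V q.1 * W q.2 - W q.1 * V q.2) ∂volume.prod volume =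
      2 * ((∫ y, y * V y) * (∫ y, W y) - (∫ y, y * W y) * ∫ y, V y) := by
    have hexpand : (fun q : ℝ × ℝ => (q.1 - q.2) * (V q.1 * W q.2 - W q.1 * V q.2)) = fun q =>
        ((q.1 * V q.1) * W q.2 - V q.1 * (q.2 * W q.2)) -
          ((q.1 * W q.1) * V q.2 - W q.1 * (q.2 * V q.2)) := by
      ext q; ring
    have h₁ : Integrable (fun q : ℝ × ℝ => (q.1 * V q.1) * W q.2 - V q.1 * (q.2 * W q.2))
        (volume.prod volume) := (hyV.mul_prod hW).sub (hV.mul_prod hyW)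
    have h₂ : Integrable (fun q : ℝ × ℝ => (q.1 * W q.1) * V q.2 - W q.1 * (q.2 * V q.2))
        (volume.prod volume) := (hyW.mul_prod hV).sub (hW.mul_prod hyV)
    rw [hexpand, integral_sub h₁ h₂, integral_sub (hyV.mul_prod hW) (hV.mul_prod hyW),
      integral_sub (hyW.mul_prod hV) (hW.mul_prod hyV),
      integral_prod_mul (fun y => y * V y) W, integral_prod_mul V (fun z => z * W z),
      integral_prod_mul (fun y => y * W y) V, integral_prod_mul W (fun z => z * V z)]
    ring
  have hnonneg := integral_nonneg (μ := volume.prod volume)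
    (f := fun q : ℝ × ℝ => (q.1 - q.2) * (V q.1 * W q.2 - W q.1 * V q.2)) fun q => h q.1 q.2
  rw [densityMean, densityMean, div_le_div_iff₀ hW_pos hV_pos]
  linarith

end LikelihoodRatioLE

theorem likelihoodRatioLE_exp_tilt {w : ℝ → ℝ} (hw : ∀ y, 0 ≤ w y) {t t' : ℝ} (htt' : t ≤ t') :
    LikelihoodRatioLE (fun y => w y * exp (t * y)) (fun y => w y * exp (t' * y)) := fun y z => by
  have hexp : 0 ≤ (y - z) * (exp (t' * y + t * z) - exp (t * y + t' * z)) := by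
    rcases le_total z y with hzy | hyz
    · exact mul_nonneg (sub_nonneg.2 hzy) (sub_nonneg.2 (exp_le_exp.2 (by nlinarith)))
    · exact mul_nonneg_of_nonpos_of_nonpos (sub_nonpos.2 hyz)
        (sub_nonpos.2 (exp_le_exp.2 (by nlinarith)))
  calc 0 ≤ w y * w z * ((y - z) * (exp (t' * y + t * z) - exp (t * y + t' * z))) :=
        mul_nonneg (mul_nonneg (hw y) (hw z)) hexp
    _ = _ := by simp only [exp_add]; ring

theorem LinearMap.exists_monotone_comp_eq {M : Type*} [AddCommGroup M] [Module ℝ M]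
    (ℓ : M →ₗ[ℝ] ℝ) {g : M → ℝ} (hg : ∀ x y, ℓ x ≤ ℓ y → g x ≤ g y) :
    ∃ μ : ℝ → ℝ, Monotone μ ∧ ∀ x, g x = μ (ℓ x) := by
  rcases ℓ.surjective_or_eq_zero with hℓ | rfl
  · refine ⟨g ∘ Function.surjInv hℓ, fun s s' hss' => hg _ _ ?_, fun x => ?_⟩
    · simpa only [Function.surjInv_eq hℓ] using hss'
    · have hx := Function.surjInv_eq hℓ (ℓ x)
      exact le_antisymm (hg _ _ hx.ge) (hg _ _ hx.le)
  · exact ⟨fun _ => g 0, monotone_const, fun x => le_antisymm (hg _ _ le_rfl) (hg _ _ le_rfl)⟩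

theorem testing_mean_is_monotone_single_index_general
    {p : ℕ} (β : Fin p → ℝ) (a : ℝ) (ha : 0 < a)
    (θ : (Fin p → ℝ) → ℝ) (T : ℝ → ℝ) (hT : StrictMono T)
    (hθ : ∀ x, θ x = T (∑ i, x i * β i))
    (b : ℝ → ℝ) (c : ℝ → ℝ) (sel : ℝ → ℝ) (hsel : ∀ y, 0 ≤ sel y)
    (f fstar : ℝ → (Fin p → ℝ) → ℝ)
    (hf : ∀ y x, f y x = Real.exp ((y * θ x - b (θ x)) / a + c y))
    (hNint : ∀ x, Integrable (fun y : ℝ => sel y * f y x))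
    (hNpos : ∀ x, 0 < ∫ y : ℝ, sel y * f y x)
    (hfstar : ∀ y x, fstar y x = sel y * f y x / ∫ z : ℝ, sel z * f z x)
    (hstarint : ∀ x, Integrable (fun y : ℝ => y * fstar y x))
    (mstar : (Fin p → ℝ) → ℝ)
    (hmstar : ∀ x, mstar x = ∫ y : ℝ, y * fstar y x) :
    ∃ μ₂ : ℝ → ℝ, Monotone μ₂ ∧ ∀ x, mstar x = μ₂ (∑ i, x i * β i) := by
  have hmean : ∀ x, mstar x = densityMean fun y => sel y * f y x := fun x => by
    simp only [hmstar, hfstar, densityMean, ← integral_div, mul_div_assoc]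
  have hmoment : ∀ x, Integrable fun y => y * (sel y * f y x) := fun x =>
    ((hstarint x).mul_const (∫ z, sel z * f z x)).congr <| ae_of_all _ fun y => by
      simp only [hfstar]; field_simp [(hNpos x).ne']
  have htilt : ∀ x, (fun y => sel y * f y x) =
      fun y => exp (-b (θ x) / a) * (sel y * exp (c y) * exp (θ x / a * y)) := fun x => by
    ext y
    rw [hf, show (y * θ x - b (θ x)) / a + c y = -b (θ x) / a + c y + θ x / a * y by ring,
      exp_add, exp_add]
    ring
  have hmono : ∀ x x', ∑ i, x i * β i ≤ ∑ i, x' i * β i → mstar x ≤ mstar x' := by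
    intro x x' hxx'
    have hθθ' : θ x / a ≤ θ x' / a := by
      rw [hθ, hθ]; exact div_le_div_of_nonneg_right (hT.monotone hxx') ha.le
    have hLR : LikelihoodRatioLE (fun y => sel y * f y x) (fun y => sel y * f y x') := by
      rw [htilt, htilt]
      exact (likelihoodRatioLE_exp_tilt (fun y => mul_nonneg (hsel y) (exp_pos _).le)
        hθθ').const_mul (exp_pos _).le (exp_pos _).le
    rw [hmean, hmean]
    exact hLR.densityMean_le (hNint x) (hNint x') (hmoment x) (hmoment x') (hNpos x) (hNpos x')
  exact ((dotProductBilin ℝ ℝ).flip β).exists_monotone_comp_eq hmono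

/-- Proposition 1 (prior probability shift model).  Training density: canonical exponential
family `f y x = exp ((y * θ x − b (θ x))/a + c y)` with `a > 0`, whose mean is
`μ₁ (xᵀβ)` with `μ₁` strictly increasing, and the canonical parameter `θ x = T (xᵀβ)` with `T`
strictly increasing.  Testing density `f* y x = sel y * f y x / ∫ sel f`, with positive finite
normalizer, and testing conditional mean `mstar x = ∫ y f*(y|x) dy`.  Then there exists a
nondecreasing function `μ₂` such that `mstar x = μ₂ (xᵀβ)` for all `x`. -/
theorem testing_mean_is_monotone_single_index
    {p : ℕ} (β : Fin p → ℝ) (a : ℝ) (ha : 0 < a)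
    (θ : (Fin p → ℝ) → ℝ) (T : ℝ → ℝ) (hT : StrictMono T)
    (hθ : ∀ x, θ x = T (∑ i, x i * β i))
    (b : ℝ → ℝ) (c : ℝ → ℝ) (sel : ℝ → ℝ) (hsel : ∀ y, 0 ≤ sel y)
    (f fstar : ℝ → (Fin p → ℝ) → ℝ)
    (hf : ∀ y x, f y x = Real.exp ((y * θ x - b (θ x)) / a + c y))
    (μ₁ : ℝ → ℝ) (hμ₁ : StrictMono μ₁)
    (hmean1 : ∀ x, deriv b (θ x) = μ₁ (∑ i, x i * β i))
    (hNint : ∀ x, Integrable (fun y : ℝ => sel y * f y x))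
    (hNpos : ∀ x, 0 < ∫ y : ℝ, sel y * f y x)
    (hfstar : ∀ y x, fstar y x = sel y * f y x / ∫ z : ℝ, sel z * f z x)
    (hstarint : ∀ x, Integrable (fun y : ℝ => y * fstar y x))
    (mstar : (Fin p → ℝ) → ℝ)
    (hmstar : ∀ x, mstar x = ∫ y : ℝ, y * fstar y x) :
    ∃ μ₂ : ℝ → ℝ, Monotone μ₂ ∧ ∀ x, mstar x = μ₂ (∑ i, x i * β i) :=
  testing_mean_is_monotone_single_index_general β a ha θ T hT hθ b c sel hsel f fstar hf hNint hNpos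
    hfstar hstarint mstar hmstar
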